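/- Let 2 ≤ p < ∞ and q with 1/p + 1/q = 1/2. Suppose Φ ∈ L^p(M_n) admits a factorization Φ = W* diag(Δ, Φ_#) V*, where V and W^t are k-balanced unitary-valued matrix functions (V = (Υ Θ̄), W^t = (Ω Ξ̄) with Υ, Ω, Θ, Ξ inner and co-outer), Δ is a k×k p-badly approximable matrix function, and Φ_# satisfies ‖Φ_#(ζ)‖_{M_{n−k}} ≤ ‖Δ(ζ)‖_{M_k} a.e. on 𝕋. Then Φ is p-badly approximable. -/

import Mathlib

open MeasureTheory Complex AddCircle Matrix
open scoped ENNReal Real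

noncomputable section

instance : Fact (0 < 2 * Real.pi) := ⟨by positivity⟩

/-- The unit circle, realized as `ℝ / 2πℤ`. -/
abbrev UnitCircle := AddCircle (2 * Real.pi)

/-- Normalized Lebesgue (Haar) measure on the circle. -/
abbrev mT : Measure UnitCircle := haarAddCircle

/-- Operator norm of a matrix, acting between Euclidean spaces. -/
def opN {ι κ : Type} [Fintype ι] [Fintype κ] [DecidableEq κ] (A : Matrix ι κ ℂ) : ℝ :=
  ‖(LinearMap.toContinuousLinearMap (Matrix.toEuclideanLin A) :
      EuclideanSpace ℂ κ →L[ℂ] EuclideanSpace ℂ ι)‖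

/-- Hilbert–Schmidt (Frobenius) norm of a matrix. -/
def frob {ι κ : Type} [Fintype ι] [Fintype κ] (A : Matrix ι κ ℂ) : ℝ :=
  Real.sqrt (∑ i, ∑ j, ‖A i j‖ ^ 2)

/-- Trace (nuclear) norm of a matrix: the sum of its singular values, i.e. of the
square roots of the eigenvalues of `Aᴴ * A`. -/
def trN {ι κ : Type} [Fintype ι] [Fintype κ] [DecidableEq κ] (A : Matrix ι κ ℂ) : ℝ :=
  ∑ j, Real.sqrt ((Matrix.isHermitian_mul_conjTranspose_self Aᴴ).eigenvalues j)

/-- The scalar Hardy class `H^p` on the circle: `L^p` functions whose negative Fourier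
coefficients vanish. -/
def ScalarHardy (p : ℝ≥0∞) (f : UnitCircle → ℂ) : Prop :=
  MemLp f p mT ∧ ∀ n : ℤ, n < 0 → fourierCoeff f n = 0

/-- The vector-valued Hardy class `H^p(ℂ^ι)`. -/
def VectHardy {ι : Type} [Fintype ι] (p : ℝ≥0∞) (f : UnitCircle → EuclideanSpace ℂ ι) : Prop :=
  MemLp f p mT ∧ ∀ n : ℤ, n < 0 → fourierCoeff f n = 0

/-- The matrix-valued Hardy class `H^p(M_{ι,κ})` (entrywise). -/
def MatHardy {ι κ : Type} [Fintype ι] [Fintype κ] (p : ℝ≥0∞)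
    (F : UnitCircle → Matrix ι κ ℂ) : Prop :=
  (∀ i j, MemLp (fun t => F t i j) p mT) ∧
    ∀ n : ℤ, n < 0 → ∀ i j, fourierCoeff (fun t => F t i j) n = 0

/-- The `L²` norm of the antianalytic (negative-frequency) part of a scalar function,
computed via Parseval. -/
def negNormSc (g : UnitCircle → ℂ) : ℝ≥0∞ :=
  (∑' k : ℕ, (‖fourierCoeff g (-((k : ℤ) + 1))‖₊ : ℝ≥0∞) ^ 2) ^ (1 / 2 : ℝ)

/-- The `L²(ℂ^ι)` norm of the antianalytic part of a vector function. -/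
def negNormVec {ι : Type} [Fintype ι] (g : UnitCircle → EuclideanSpace ℂ ι) : ℝ≥0∞ :=
  (∑' k : ℕ, (‖fourierCoeff g (-((k : ℤ) + 1))‖₊ : ℝ≥0∞) ^ 2) ^ (1 / 2 : ℝ)

/-- The `L²(S₂)` norm of the antianalytic part of a matrix function. -/
def negNormMat {ι κ : Type} [Fintype ι] [Fintype κ] (G : UnitCircle → Matrix ι κ ℂ) : ℝ≥0∞ :=
  (∑' k : ℕ, ∑ i, ∑ j,
      (‖fourierCoeff (fun t => G t i j) (-((k : ℤ) + 1))‖₊ : ℝ≥0∞) ^ 2) ^ (1 / 2 : ℝ)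

/-- The norm of the Hankel operator `H_Φ : H^q(S₂) → H²₋(S₂)` on matrix functions,
`F ↦ P₋(ΦF)`. -/
def matHankelNorm {ι : Type} [Fintype ι] (q : ℝ≥0∞)
    (Φ : UnitCircle → Matrix ι ι ℂ) : ℝ≥0∞ :=
  ⨆ F : {F : UnitCircle → Matrix ι ι ℂ //
      MatHardy q F ∧ eLpNorm (fun t => frob (F t)) q mT ≤ 1},
    negNormMat (fun t => Φ t * F.1 t)

/-- The distance in `L^p` (pointwise operator norm) from `Φ` to `H^p(M_n)`. -/
def distHp {ι κ : Type} [Fintype ι] [Fintype κ] [DecidableEq κ] (p : ℝ≥0∞)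
    (Φ : UnitCircle → Matrix ι κ ℂ) : ℝ≥0∞ :=
  ⨅ Q : {Q : UnitCircle → Matrix ι κ ℂ // MatHardy p Q},
    eLpNorm (fun t => opN (Φ t - Q.1 t)) p mT

/-- `Q` is a best analytic approximant to `Φ` in `L^p`. -/
def IsBestApprox {ι κ : Type} [Fintype ι] [Fintype κ] [DecidableEq κ] (p : ℝ≥0∞)
    (Φ Q : UnitCircle → Matrix ι κ ℂ) : Prop :=
  MatHardy p Q ∧ eLpNorm (fun t => opN (Φ t - Q t)) p mT = distHp p Φ

/-- `F` is a maximizing vector of the matrix Hankel operator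
`H_Φ : H^q(S₂) → H²₋(S₂)`. -/
def IsMaximizing {ι : Type} [Fintype ι] (q : ℝ≥0∞)
    (Φ F : UnitCircle → Matrix ι ι ℂ) : Prop :=
  MatHardy q F ∧ ¬ F =ᵐ[mT] 0 ∧
    negNormMat (fun t => Φ t * F t) =
      matHankelNorm q Φ * eLpNorm (fun t => frob (F t)) q mT

/-- A scalar inner function: bounded, analytic, of modulus one a.e. on the circle. -/
def IsInner (θ : UnitCircle → ℂ) : Prop :=
  MemLp θ ⊤ mT ∧ (∀ n : ℤ, n < 0 → fourierCoeff θ n = 0) ∧ ∀ᵐ t ∂mT, ‖θ t‖ = 1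

/-- A scalar outer function in `H²`, characterized by the arithmetic–geometric mean
equality `log |ĥ(0)| = ∫ log |h| dm`. -/
def IsOuter (h : UnitCircle → ℂ) : Prop :=
  MemLp h 2 mT ∧ (∀ n : ℤ, n < 0 → fourierCoeff h n = 0) ∧
    Integrable (fun t => Real.log ‖h t‖) mT ∧
    Real.log ‖fourierCoeff h 0‖ = ∫ t, Real.log ‖h t‖ ∂mT

/-- An inner matrix function: bounded analytic with `Θᴴ Θ = I` a.e. on the circle. -/
def MatInner {ι κ : Type} [Fintype ι] [Fintype κ] [DecidableEq κ]
    (Θ : UnitCircle → Matrix ι κ ℂ) : Prop :=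
  (∀ i j, MemLp (fun t => Θ t i j) ⊤ mT) ∧
    (∀ n : ℤ, n < 0 → ∀ i j, fourierCoeff (fun t => Θ t i j) n = 0) ∧
    ∀ᵐ t ∂mT, (Θ t)ᴴ * Θ t = 1

/-- An analytic (nonnegative-frequency) vector-valued trigonometric polynomial. -/
def AnalyticTrigPoly {ι : Type} [Fintype ι] (g : UnitCircle → EuclideanSpace ℂ ι) : Prop :=
  ∃ (N : ℕ) (c : Fin N → EuclideanSpace ℂ ι),
    g = fun t => ∑ j : Fin N, (fourier ((j : ℕ) : ℤ) t) • c j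

/-- An outer matrix function: `F ∈ H²` and polynomial multiples of `F` are dense
in `H²(ℂ^ι)`. -/
def MatOuter {ι κ : Type} [Fintype ι] [Fintype κ] [DecidableEq κ]
    (F : UnitCircle → Matrix ι κ ℂ) : Prop :=
  MatHardy 2 F ∧
    ∀ g : UnitCircle → EuclideanSpace ℂ ι, VectHardy 2 g → ∀ ε : ℝ, 0 < ε →
      ∃ q : UnitCircle → EuclideanSpace ℂ κ, AnalyticTrigPoly q ∧
        eLpNorm (fun t => Matrix.toEuclideanLin (F t) (q t) - g t) 2 mT < ENNReal.ofReal ε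

/-- A co-outer matrix function: its transpose is outer. -/
def MatCoouter {ι κ : Type} [Fintype ι] [DecidableEq ι] [Fintype κ]
    (F : UnitCircle → Matrix ι κ ℂ) : Prop :=
  MatOuter (fun t => (F t)ᵀ)

/-!
For analytic `Q`, the compression `R = Ωᵀ Q Υ` is again analytic: by Parseval, the Fourier
coefficients of a product of `L²` functions are the convolution of theirs, so a product of
analytic factors has no negative frequencies. Moreover `R` is the upper-left block of `W Q V`.
Since `W` and `V` are unitary,
`‖Φ - Q‖ = ‖diag(Δ, Φ#) - W Q V‖ ≥ ‖Δ - R‖` pointwise, while `‖Φ‖ = max(‖Δ‖, ‖Φ#‖) = ‖Δ‖`.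
Hence `‖Φ‖_p ≤ ‖Δ‖_p ≤ ‖Δ - R‖_p ≤ ‖Φ - Q‖_p`, the middle step being the badness of `Δ`.
-/

open scoped ComplexConjugate Matrix.Norms.L2Operator

section FourierProduct

variable {T : ℝ} [Fact (0 < T)]

theorem memLp_top_fourier (n : ℤ) : MemLp (fourier n) ⊤ (haarAddCircle (T := T)) :=
  memLp_top_of_bound (map_continuous (fourier n)).aestronglyMeasurable 1
    (.of_forall fun t => by rw [fourier_apply, Circle.norm_coe])

theorem fourierCoeff_mul_eq_tsum {f g : AddCircle T → ℂ} (hf : MemLp f 2 haarAddCircle)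
    (hg : MemLp g 2 haarAddCircle) (n : ℤ) :
    fourierCoeff (fun t => f t * g t) n = ∑' m, fourierCoeff f (n - m) * fourierCoeff g m := by
  have hu : MemLp (fun t => conj (fourier (-n) t * f t)) 2 haarAddCircle :=
    (hf.mul' (memLp_top_fourier (-n))).star
  have hf_inner : ∀ m, inner ℂ (hu.toLp _) (fourierBasis m) = fourierCoeff f (n - m) := by
    intro m
    rw [coe_fourierBasis, L2.inner_def, fourierCoeff]
    refine integral_congr_ae ?_
    filter_upwards [hu.coeFn_toLp, coeFn_fourierLp 2 m] with t hut hmt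
    rw [RCLike.inner_apply, hut, hmt, Complex.conj_conj, smul_eq_mul, sub_eq_add_neg, neg_add,
      neg_neg, fourier_add]
    ring
  have hg_inner : ∀ m, inner ℂ (fourierBasis m) (hg.toLp g) = fourierCoeff g m := by
    intro m
    rw [← fourierBasis.repr_apply_apply, fourierBasis_repr]
    exact congrFun (fourierCoeff_congr_ae hg.coeFn_toLp) m
  simp_rw [← hf_inner, ← hg_inner, fourierBasis.tsum_inner_mul_inner, L2.inner_def, fourierCoeff]
  refine integral_congr_ae ?_
  filter_upwards [hu.coeFn_toLp, hg.coeFn_toLp] with t hut hgt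
  rw [RCLike.inner_apply, hut, hgt, Complex.conj_conj, smul_eq_mul]
  ring

theorem fourierCoeff_mul_eq_zero_of_neg {f g : AddCircle T → ℂ} (hf : MemLp f 2 haarAddCircle)
    (hg : MemLp g 2 haarAddCircle) (hf₀ : ∀ n < 0, fourierCoeff f n = 0)
    (hg₀ : ∀ n < 0, fourierCoeff g n = 0) {n : ℤ} (hn : n < 0) :
    fourierCoeff (fun t => f t * g t) n = 0 := by
  rw [fourierCoeff_mul_eq_tsum hf hg]
  convert tsum_zero with m
  rcases lt_or_ge m 0 with hm | hm
  · rw [hg₀ m hm, mul_zero]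
  · rw [hf₀ (n - m) (by omega), zero_mul]

end FourierProduct

namespace ScalarHardy

theorem mul {p : ℝ≥0∞} {f g : UnitCircle → ℂ} (hf : ScalarHardy ⊤ f) (hg : ScalarHardy p g)
    (hp : 2 ≤ p) : ScalarHardy p (fun t => f t * g t) :=
  ⟨hg.1.mul' hf.1, fun _ hn => fourierCoeff_mul_eq_zero_of_neg (hf.1.mono_exponent le_top)
    (hg.1.mono_exponent hp) hf.2 hg.2 hn⟩

theorem finsetSum {p : ℝ≥0∞} {ι : Type} {s : Finset ι} {f : ι → UnitCircle → ℂ}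
    (hf : ∀ i ∈ s, ScalarHardy p (f i)) (hp : 1 ≤ p) :
    ScalarHardy p (fun t => ∑ i ∈ s, f i t) := by
  refine ⟨memLp_finsetSum s fun i hi => (hf i hi).1, fun n hn => ?_⟩
  rw [← Finset.sum_fn, fourierCoeff.sum s f fun i hi => (hf i hi).1.integrable hp,
    Finset.sum_apply]
  exact Finset.sum_eq_zero fun i hi => (hf i hi).2 n hn

end ScalarHardy

theorem matHardy_iff {p : ℝ≥0∞} {ι κ : Type} [Fintype ι] [Fintype κ]
    {F : UnitCircle → Matrix ι κ ℂ} :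
    MatHardy p F ↔ ∀ i j, ScalarHardy p (fun t => F t i j) :=
  ⟨fun h i j => ⟨h.1 i j, fun n hn => h.2 n hn i j⟩,
    fun h => ⟨fun i j => (h i j).1, fun n hn i j => (h i j).2 n hn⟩⟩

namespace MatHardy

variable {p : ℝ≥0∞} {ι κ ν : Type} [Fintype ι] [Fintype κ] [Fintype ν]

theorem transpose {F : UnitCircle → Matrix ι κ ℂ} (hF : MatHardy p F) :
    MatHardy p (fun t => (F t)ᵀ) :=
  matHardy_iff.2 fun i j => matHardy_iff.1 hF j i

theorem top_mul {A : UnitCircle → Matrix ι κ ℂ} {B : UnitCircle → Matrix κ ν ℂ}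
    (hA : MatHardy ⊤ A) (hB : MatHardy p B) (hp : 2 ≤ p) :
    MatHardy p (fun t => A t * B t) := by
  refine matHardy_iff.2 fun i j => ?_
  simp only [Matrix.mul_apply]
  exact ScalarHardy.finsetSum (fun k _ => (matHardy_iff.1 hA i k).mul (matHardy_iff.1 hB k j) hp)
    (one_le_two.trans hp)

theorem mul_top {A : UnitCircle → Matrix ι κ ℂ} {B : UnitCircle → Matrix κ ν ℂ}
    (hA : MatHardy p A) (hB : MatHardy ⊤ B) (hp : 2 ≤ p) :
    MatHardy p (fun t => A t * B t) := by
  simpa only [Matrix.transpose_mul, Matrix.transpose_transpose] using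
    (hB.transpose.top_mul hA.transpose hp).transpose

end MatHardy

theorem MatInner.matHardy_top {ι κ : Type} [Fintype ι] [Fintype κ] [DecidableEq κ]
    {Θ : UnitCircle → Matrix ι κ ℂ} (hΘ : MatInner Θ) : MatHardy ⊤ Θ :=
  ⟨hΘ.1, hΘ.2.1⟩

namespace Matrix

variable {m n m' n' : Type*}

theorem toBlocks₁₁_transpose_fromCols_mul_mul_fromCols {α l l' : Type*} [Semiring α] [Fintype l]
    [Fintype l'] (A₁ : Matrix l m α) (A₂ : Matrix l m' α) (Q : Matrix l l' α)
    (B₁ : Matrix l' n α) (B₂ : Matrix l' n' α) :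
    ((fromCols A₁ A₂)ᵀ * Q * fromCols B₁ B₂).toBlocks₁₁ = A₁ᵀ * Q * B₁ := by
  rw [transpose_fromCols, fromRows_mul, fromRows_mul_fromCols, toBlocks_fromBlocks₁₁]

variable {𝕜 : Type*} [RCLike 𝕜] [Fintype m] [Fintype n] [Fintype m'] [Fintype n']

theorem l2_opNorm_one_le [DecidableEq n] : ‖(1 : Matrix n n 𝕜)‖ ≤ 1 := by
  rw [← diagonal_one, l2_opNorm_diagonal]
  exact (pi_norm_le_iff_of_nonneg zero_le_one).2 fun _ => by simp

theorem l2_opNorm_fromRows_one_zero_le [DecidableEq n] :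
    ‖(fromRows 1 0 : Matrix (n ⊕ m') n 𝕜)‖ ≤ 1 := by
  have h := l2_opNorm_conjTranspose_mul_self (fromRows 1 0 : Matrix (n ⊕ m') n 𝕜)
  rw [conjTranspose_fromRows_eq_fromCols_conjTranspose, fromCols_mul_fromRows] at h
  simp only [conjTranspose_one, mul_one, conjTranspose_zero, Matrix.mul_zero, add_zero] at h
  nlinarith [l2_opNorm_one_le (𝕜 := 𝕜) (n := n), norm_nonneg (fromRows 1 0 : Matrix (n ⊕ m') n 𝕜)]

theorem toBlocks₁₁_eq_conjTranspose_mul_mul [DecidableEq m] [DecidableEq n]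
    (M : Matrix (m ⊕ m') (n ⊕ n') 𝕜) :
    M.toBlocks₁₁ =
      (fromRows 1 0 : Matrix (m ⊕ m') m 𝕜)ᴴ * M * (fromRows 1 0 : Matrix (n ⊕ n') n 𝕜) :=
  Matrix.ext fun i j => by simp [toBlocks₁₁, mul_apply, Fintype.sum_sum_type, one_apply]

theorem l2_opNorm_toBlocks₁₁_le [DecidableEq n] [DecidableEq n']
    (M : Matrix (m ⊕ m') (n ⊕ n') 𝕜) : ‖M.toBlocks₁₁‖ ≤ ‖M‖ := by
  classical
  rw [toBlocks₁₁_eq_conjTranspose_mul_mul]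
  calc _ ≤ ‖(fromRows 1 0 : Matrix (m ⊕ m') m 𝕜)ᴴ‖ * ‖M‖ *
          ‖(fromRows 1 0 : Matrix (n ⊕ n') n 𝕜)‖ :=
        (l2_opNorm_mul _ _).trans (by gcongr; exact l2_opNorm_mul _ _)
    _ ≤ 1 * ‖M‖ * 1 := by
        rw [l2_opNorm_conjTranspose]
        gcongr <;> exact l2_opNorm_fromRows_one_zero_le
    _ = ‖M‖ := by ring

theorem l2_opNorm_fromBlocks_zero_le [DecidableEq n] [DecidableEq n'] (A : Matrix m n 𝕜)
    (B : Matrix m' n' 𝕜) : ‖fromBlocks A 0 0 B‖ ≤ max ‖A‖ ‖B‖ := by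
  refine ContinuousLinearMap.opNorm_le_bound _ (by positivity) fun x => ?_
  set x₁ : EuclideanSpace 𝕜 n := WithLp.toLp 2 fun i => x (Sum.inl i)
  set x₂ : EuclideanSpace 𝕜 n' := WithLp.toLp 2 fun i => x (Sum.inr i)
  have hx : ‖x‖ ^ 2 = ‖x₁‖ ^ 2 + ‖x₂‖ ^ 2 := by
    simp [EuclideanSpace.norm_sq_eq, Fintype.sum_sum_type, x₁, x₂]
  have hDx : ‖(toEuclideanLin.trans LinearMap.toContinuousLinearMap) (fromBlocks A 0 0 B) x‖ ^ 2 =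
      ‖(EuclideanSpace.equiv m 𝕜).symm (A *ᵥ x₁)‖ ^ 2 +
        ‖(EuclideanSpace.equiv m' 𝕜).symm (B *ᵥ x₂)‖ ^ 2 := by
    simp [EuclideanSpace.norm_sq_eq, Fintype.sum_sum_type, fromBlocks_mulVec, x₁, x₂]
    rfl
  refine (sq_le_sq₀ (by positivity) (by positivity)).mp ?_
  calc _ = _ := hDx
    _ ≤ (max ‖A‖ ‖B‖ * ‖x₁‖) ^ 2 + (max ‖A‖ ‖B‖ * ‖x₂‖) ^ 2 := by
        gcongr
        · exact (l2_opNorm_mulVec A x₁).trans (by gcongr; exact le_max_left _ _)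
        · exact (l2_opNorm_mulVec B x₂).trans (by gcongr; exact le_max_right _ _)
    _ = (max ‖A‖ ‖B‖ * ‖x‖) ^ 2 := by rw [mul_pow _ ‖x‖, hx]; ring

section Unitary

variable [DecidableEq m] [DecidableEq m'] {U V : Matrix (m ⊕ m') (m ⊕ m') 𝕜}

theorem l2_opNorm_mul_fromBlocks_mul_le (hU : U ∈ unitary _) (hV : V ∈ unitary _)
    {A : Matrix m m 𝕜} {B : Matrix m' m' 𝕜} (hBA : ‖B‖ ≤ ‖A‖) :
    ‖U * fromBlocks A 0 0 B * V‖ ≤ ‖A‖ := by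
  rw [CStarRing.norm_mul_mem_unitary _ hV, CStarRing.norm_mem_unitary_mul _ hU]
  exact (l2_opNorm_fromBlocks_zero_le A B).trans (max_le le_rfl hBA)

theorem l2_opNorm_toBlocks₁₁_sub_le (hU : U ∈ unitary _) (hV : V ∈ unitary _)
    (M Q : Matrix (m ⊕ m') (m ⊕ m') 𝕜) :
    ‖M.toBlocks₁₁ - (star U * Q * star V).toBlocks₁₁‖ ≤ ‖U * M * V - Q‖ := by
  have hQ : U * M * V - Q = U * (M - star U * Q * star V) * V := by
    rw [mul_sub, sub_mul, ← mul_assoc U, ← mul_assoc U, Unitary.mul_star_self_of_mem hU, one_mul,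
      mul_assoc Q, Unitary.star_mul_self_of_mem hV, mul_one]
  rw [hQ, CStarRing.norm_mul_mem_unitary _ hV, CStarRing.norm_mem_unitary_mul _ hU]
  have hsub : (M - star U * Q * star V).toBlocks₁₁ =
      M.toBlocks₁₁ - (star U * Q * star V).toBlocks₁₁ :=
    rfl
  exact hsub ▸ l2_opNorm_toBlocks₁₁_le _

end Unitary

end Matrix

theorem opN_eq_l2_opNorm {ι κ : Type} [Fintype ι] [Fintype κ] [DecidableEq κ]
    (A : Matrix ι κ ℂ) : opN A = ‖A‖ :=
  rfl

theorem opN_nonneg {ι κ : Type} [Fintype ι] [Fintype κ] [DecidableEq κ] (A : Matrix ι κ ℂ) :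
    0 ≤ opN A :=
  norm_nonneg _

theorem eLpNorm_opN_mono_ae {ι κ ι' κ' : Type} [Fintype ι] [Fintype κ] [DecidableEq κ]
    [Fintype ι'] [Fintype κ'] [DecidableEq κ'] {p : ℝ≥0∞} {F : UnitCircle → Matrix ι κ ℂ}
    {G : UnitCircle → Matrix ι' κ' ℂ} (h : ∀ᵐ t ∂mT, opN (F t) ≤ opN (G t)) :
    eLpNorm (fun t => opN (F t)) p mT ≤ eLpNorm (fun t => opN (G t)) p mT :=
  eLpNorm_mono_ae_real (h.mono fun _ ht => (Real.norm_of_nonneg (opN_nonneg _)).trans_le ht)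

theorem stmt19_general {k l : ℕ} (p : ℝ≥0∞) (hp2 : 2 ≤ p)
    (Φ : UnitCircle → Matrix (Fin k ⊕ Fin l) (Fin k ⊕ Fin l) ℂ)
    (Υ : UnitCircle → Matrix (Fin k ⊕ Fin l) (Fin k) ℂ)
    (Θ : UnitCircle → Matrix (Fin k ⊕ Fin l) (Fin l) ℂ)
    (Ω : UnitCircle → Matrix (Fin k ⊕ Fin l) (Fin k) ℂ)
    (Ξ : UnitCircle → Matrix (Fin k ⊕ Fin l) (Fin l) ℂ)
    (hΥ : MatInner Υ ∧ MatCoouter Υ)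
    (hΩ : MatInner Ω ∧ MatCoouter Ω)
    (V W : UnitCircle → Matrix (Fin k ⊕ Fin l) (Fin k ⊕ Fin l) ℂ)
    (hV : V = fun t => Matrix.fromCols (Υ t) ((Θ t).map (starRingEnd ℂ)))
    (hW : W = fun t => (Matrix.fromCols (Ω t) ((Ξ t).map (starRingEnd ℂ)))ᵀ)
    (hVu : ∀ᵐ t ∂mT, (V t)ᴴ * V t = 1)
    (hWu : ∀ᵐ t ∂mT, (W t)ᴴ * W t = 1)
    (Δ : UnitCircle → Matrix (Fin k) (Fin k) ℂ)
    (hΔbad : ∀ Q : UnitCircle → Matrix (Fin k) (Fin k) ℂ, MatHardy p Q →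
      eLpNorm (fun t => opN (Δ t)) p mT ≤ eLpNorm (fun t => opN (Δ t - Q t)) p mT)
    (Φs : UnitCircle → Matrix (Fin l) (Fin l) ℂ)
    (hΦs : ∀ᵐ t ∂mT, opN (Φs t) ≤ opN (Δ t))
    (hfact : ∀ᵐ t ∂mT, Φ t = (W t)ᴴ * Matrix.fromBlocks (Δ t) 0 0 (Φs t) * (V t)ᴴ) :
    ∀ Q : UnitCircle → Matrix (Fin k ⊕ Fin l) (Fin k ⊕ Fin l) ℂ, MatHardy p Q →
      eLpNorm (fun t => opN (Φ t)) p mT ≤ eLpNorm (fun t => opN (Φ t - Q t)) p mT := by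
  intro Q hQ
  have hR : MatHardy p fun t => (Ω t)ᵀ * Q t * Υ t :=
    (hΩ.1.matHardy_top.transpose.top_mul hQ hp2).mul_top hΥ.1.matHardy_top hp2
  have hpt : ∀ᵐ t ∂mT, opN (Φ t) ≤ opN (Δ t) ∧
      opN (Δ t - (Ω t)ᵀ * Q t * Υ t) ≤ opN (Φ t - Q t) := by
    filter_upwards [hfact, hVu, hWu, hΦs] with t hΦt hVt hWt hΦst
    have hWt' : (W t)ᴴ ∈ unitary _ := Unitary.star_mem (mem_unitaryGroup_iff'.2 hWt)
    have hVt' : (V t)ᴴ ∈ unitary _ := Unitary.star_mem (mem_unitaryGroup_iff'.2 hVt)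
    have hWQV : (W t * Q t * V t).toBlocks₁₁ = (Ω t)ᵀ * Q t * Υ t := by
      rw [hV, hW]
      exact toBlocks₁₁_transpose_fromCols_mul_mul_fromCols _ _ _ _ _
    have hblock := l2_opNorm_toBlocks₁₁_sub_le hWt' hVt' (fromBlocks (Δ t) 0 0 (Φs t)) (Q t)
    simp only [star_eq_conjTranspose, conjTranspose_conjTranspose, hWQV,
      toBlocks_fromBlocks₁₁] at hblock
    simp only [opN_eq_l2_opNorm]
    rw [hΦt]
    exact ⟨l2_opNorm_mul_fromBlocks_mul_le hWt' hVt' hΦst, hblock⟩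
  calc eLpNorm (fun t => opN (Φ t)) p mT
      ≤ eLpNorm (fun t => opN (Δ t)) p mT := eLpNorm_opN_mono_ae (hpt.mono fun _ ht => ht.1)
    _ ≤ eLpNorm (fun t => opN (Δ t - (Ω t)ᵀ * Q t * Υ t)) p mT := hΔbad _ hR
    _ ≤ eLpNorm (fun t => opN (Φ t - Q t)) p mT := eLpNorm_opN_mono_ae (hpt.mono fun _ ht => ht.2)

/-- If `Φ ∈ L^p(M_n)` admits a factorization `Φ = Wᴴ · diag(Δ, Φ#) · Vᴴ` with `V`, `Wᵗ`
`k`-balanced (built from inner and co-outer `Υ, Θ, Ω, Ξ`), `Δ` a `k×k` `p`-badly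
approximable matrix function, and `‖Φ#(ζ)‖ ≤ ‖Δ(ζ)‖` a.e., then `Φ` is `p`-badly
approximable. -/
theorem stmt19 {k l : ℕ} (p q : ℝ≥0∞) (hp2 : 2 ≤ p) (hptop : p ≠ ⊤)
    (hpq : 1 / p + 1 / q = 1 / 2)
    (Φ : UnitCircle → Matrix (Fin k ⊕ Fin l) (Fin k ⊕ Fin l) ℂ)
    (hΦ : ∀ i j, MemLp (fun t => Φ t i j) p mT)
    (Υ : UnitCircle → Matrix (Fin k ⊕ Fin l) (Fin k) ℂ)
    (Θ : UnitCircle → Matrix (Fin k ⊕ Fin l) (Fin l) ℂ)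
    (Ω : UnitCircle → Matrix (Fin k ⊕ Fin l) (Fin k) ℂ)
    (Ξ : UnitCircle → Matrix (Fin k ⊕ Fin l) (Fin l) ℂ)
    (hΥ : MatInner Υ ∧ MatCoouter Υ) (hΘ : MatInner Θ ∧ MatCoouter Θ)
    (hΩ : MatInner Ω ∧ MatCoouter Ω) (hΞ : MatInner Ξ ∧ MatCoouter Ξ)
    (V W : UnitCircle → Matrix (Fin k ⊕ Fin l) (Fin k ⊕ Fin l) ℂ)
    (hV : V = fun t => Matrix.fromCols (Υ t) ((Θ t).map (starRingEnd ℂ)))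
    (hW : W = fun t => (Matrix.fromCols (Ω t) ((Ξ t).map (starRingEnd ℂ)))ᵀ)
    (hVu : ∀ᵐ t ∂mT, (V t)ᴴ * V t = 1)
    (hWu : ∀ᵐ t ∂mT, (W t)ᴴ * W t = 1)
    (Δ : UnitCircle → Matrix (Fin k) (Fin k) ℂ)
    (hΔLp : ∀ i j, MemLp (fun t => Δ t i j) p mT)
    (hΔbad : ∀ Q : UnitCircle → Matrix (Fin k) (Fin k) ℂ, MatHardy p Q →
      eLpNorm (fun t => opN (Δ t)) p mT ≤ eLpNorm (fun t => opN (Δ t - Q t)) p mT)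
    (Φs : UnitCircle → Matrix (Fin l) (Fin l) ℂ)
    (hΦs : ∀ᵐ t ∂mT, opN (Φs t) ≤ opN (Δ t))
    (hfact : ∀ᵐ t ∂mT, Φ t = (W t)ᴴ * Matrix.fromBlocks (Δ t) 0 0 (Φs t) * (V t)ᴴ) :
    ∀ Q : UnitCircle → Matrix (Fin k ⊕ Fin l) (Fin k ⊕ Fin l) ℂ, MatHardy p Q →
      eLpNorm (fun t => opN (Φ t)) p mT ≤ eLpNorm (fun t => opN (Φ t - Q t)) p mT :=
  stmt19_general p hp2 Φ Υ Θ Ω Ξ hΥ hΩ V W hV hW hVu hWu Δ hΔbad Φs hΦs hfact
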